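/- arXiv:2107.09438 — 3 statements merged into one kernel-verified Lean document; each statement's English description precedes it below -/
import Mathlib

section
/- Let 0 < s < 1 and define h_s(y) = ∫₀^y t^{−s} cos t dt for y ≥ 0. Then for any 0 < δ₁ < 1/10, the infimum of h_s over [δ₁, ∞) equals min{ h_s(δ₁), h_s(3π/2) }. -/
open MeasureTheory

noncomputable section

/-- `h_s(y) = ∫₀^y t^{-s} cos t dt`. -/
def hFun (s y : ℝ) : ℝ :=
  ∫ t in (0 : ℝ)..y, t ^ (-s) * Real.cos t

namespace Statement8Aux

open Real intervalIntegral

lemma intble (s : ℝ) (hs : s < 1) (a b : ℝ) :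
    IntervalIntegrable (fun t : ℝ => t ^ (-s) * Real.cos t) volume a b :=
  (intervalIntegrable_rpow' (by linarith)).mul_continuousOn
    Real.continuous_cos.continuousOn

lemma hFun_diff (s : ℝ) (hs : s < 1) (a b : ℝ) :
    hFun s b - hFun s a = ∫ t in a..b, t ^ (-s) * Real.cos t := by
  rw [hFun, hFun,
    ← intervalIntegral.integral_add_adjacent_intervals (intble s hs 0 a) (intble s hs a b)]
  ring

lemma mono_of_cos_nonneg {s : ℝ} (hs : s < 1) {a b : ℝ} (ha : 0 ≤ a) (hab : a ≤ b)
    (h : ∀ t ∈ Set.Icc a b, 0 ≤ Real.cos t) : hFun s a ≤ hFun s b := by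
  have := intervalIntegral.integral_nonneg (f := fun t : ℝ => t ^ (-s) * Real.cos t)
    (μ := volume) hab (fun u hu => mul_nonneg (Real.rpow_nonneg (le_trans ha hu.1) _) (h u hu))
  have hd := hFun_diff s hs a b
  linarith

lemma anti_of_cos_nonpos {s : ℝ} (hs : s < 1) {a b : ℝ} (ha : 0 ≤ a) (hab : a ≤ b)
    (h : ∀ t ∈ Set.Icc a b, Real.cos t ≤ 0) : hFun s b ≤ hFun s a := by
  have := intervalIntegral.integral_nonneg (f := fun t : ℝ => -(t ^ (-s) * Real.cos t))
    (μ := volume) hab (fun u hu => by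
      have := mul_nonpos_of_nonneg_of_nonpos (Real.rpow_nonneg (le_trans ha hu.1) (-s)) (h u hu)
      linarith)
  rw [intervalIntegral.integral_neg] at this
  have hd := hFun_diff s hs a b
  linarith

/-- Integral of one period starting at `c ≥ 0` where cosine is nonnegative on `[c, c+π]`. -/
lemma period_nonneg {s : ℝ} (hs0 : 0 < s) (hs1 : s < 1) {c : ℝ} (hc : 0 < c)
    (hcos : ∀ t ∈ Set.Icc c (c + π), 0 ≤ Real.cos t) :
    hFun s c ≤ hFun s (c + 2 * π) := by
  have hπ := Real.pi_pos
  set f : ℝ → ℝ := fun t => t ^ (-s) * Real.cos t with hf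
  have h1 : (∫ t in c..(c + 2 * π), f t)
      = (∫ t in c..(c + π), f t) + ∫ t in (c + π)..(c + 2 * π), f t := by
    rw [intervalIntegral.integral_add_adjacent_intervals (intble s hs1 _ _) (intble s hs1 _ _)]
  have h2 : (∫ t in (c + π)..(c + 2 * π), f t) = ∫ t in c..(c + π), f (t + π) := by
    rw [intervalIntegral.integral_comp_add_right f π]
    congr 1
    ring
  have hB : IntervalIntegrable (fun t => f (t + π)) volume c (c + π) := by
    have h := (intble s hs1 (c + π) (c + 2 * π)).comp_add_right π
    rw [add_sub_cancel_right, show c + 2 * π - π = c + π by ring] at h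
    exact h
  have h3 : (∫ t in c..(c + π), f t) + (∫ t in c..(c + π), f (t + π))
      = ∫ t in c..(c + π), (f t + f (t + π)) := by
    rw [intervalIntegral.integral_add (intble s hs1 _ _) hB]
  have h4 : 0 ≤ ∫ t in c..(c + π), (f t + f (t + π)) := by
    apply intervalIntegral.integral_nonneg (by linarith)
    intro u hu
    have hu0 : 0 < u := lt_of_lt_of_le hc hu.1
    have hcosu : Real.cos (u + π) = -Real.cos u := Real.cos_add_pi u
    have hle : (u + π) ^ (-s) ≤ u ^ (-s) :=
      Real.rpow_le_rpow_of_nonpos hu0 (by linarith) (by linarith)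
    have hcu : 0 ≤ Real.cos u := hcos u hu
    have : f u + f (u + π) = (u ^ (-s) - (u + π) ^ (-s)) * Real.cos u := by
      simp only [hf, hcosu]; ring
    rw [this]
    exact mul_nonneg (by linarith) hcu
  have hd := hFun_diff s hs1 c (c + 2 * π)
  rw [h1, h2, h3] at hd
  linarith

lemma cos_nonneg_on (k : ℕ) {t : ℝ}
    (h1 : 3 * π / 2 + 2 * π * k ≤ t) (h2 : t ≤ 3 * π / 2 + 2 * π * k + π) :
    0 ≤ Real.cos t := by
  have hπ := Real.pi_pos
  have : Real.cos t = Real.cos (t - (k + 1 : ℤ) * (2 * π)) := by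
    rw [← Real.cos_add_int_mul_two_pi (t - (k + 1 : ℤ) * (2 * π)) (k + 1)]
    ring_nf
  rw [this]
  apply Real.cos_nonneg_of_mem_Icc
  constructor <;> · push_cast; nlinarith [hπ]

lemma cos_nonpos_on (k : ℕ) {t : ℝ}
    (h1 : 3 * π / 2 + 2 * π * k + π ≤ t) (h2 : t ≤ 3 * π / 2 + 2 * π * k + 2 * π) :
    Real.cos t ≤ 0 := by
  have hπ := Real.pi_pos
  have : Real.cos t = Real.cos (t - (k + 1 : ℤ) * (2 * π)) := by
    rw [← Real.cos_add_int_mul_two_pi (t - (k + 1 : ℤ) * (2 * π)) (k + 1)]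
    ring_nf
  rw [this]
  apply Real.cos_nonpos_of_pi_div_two_le_of_le <;> · push_cast; nlinarith [hπ]

lemma trough_le {s : ℝ} (hs0 : 0 < s) (hs1 : s < 1) : ∀ k : ℕ,
    hFun s (3 * π / 2) ≤ hFun s (3 * π / 2 + 2 * π * k) := by
  have hπ := Real.pi_pos
  intro k
  induction k with
  | zero => simp
  | succ n ih =>
    refine le_trans ih ?_
    have h := period_nonneg hs0 hs1 (c := 3 * π / 2 + 2 * π * n)
      (by positivity) (fun t ht => cos_nonneg_on n ht.1 ht.2)
    calc hFun s (3 * π / 2 + 2 * π * n) ≤ hFun s (3 * π / 2 + 2 * π * n + 2 * π) := h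
      _ = hFun s (3 * π / 2 + 2 * π * (n + 1 : ℕ)) := by push_cast; ring_nf

lemma lower_bound_tail {s : ℝ} (hs0 : 0 < s) (hs1 : s < 1) {y : ℝ} (hy : 3 * π / 2 ≤ y) :
    hFun s (3 * π / 2) ≤ hFun s y := by
  have hπ := Real.pi_pos
  set k : ℕ := ⌊(y - 3 * π / 2) / (2 * π)⌋₊ with hk
  set c : ℝ := 3 * π / 2 + 2 * π * k with hcdef
  have h2π : (0:ℝ) < 2 * π := by linarith
  have hky : (k : ℝ) ≤ (y - 3 * π / 2) / (2 * π) :=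
    Nat.floor_le (div_nonneg (by linarith) (by linarith))
  have hky' : (y - 3 * π / 2) / (2 * π) < k + 1 := Nat.lt_floor_add_one _
  have hcy : c ≤ y := by
    rw [hcdef]
    have := (le_div_iff₀ h2π).mp hky
    linarith
  have hyc : y < c + 2 * π := by
    rw [hcdef]
    have := (div_lt_iff₀ h2π).mp hky'
    linarith
  have hc0 : 0 < c := by positivity
  rcases le_or_gt y (c + π) with hcase | hcase
  · -- increasing from c to y
    refine le_trans (trough_le hs0 hs1 k) ?_
    exact mono_of_cos_nonneg hs1 hc0.le hcy
      (fun t ht => cos_nonneg_on k (le_trans le_rfl ht.1) (le_trans ht.2 hcase))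
  · -- decreasing from y to c + 2π
    have h1 : hFun s (c + 2 * π) ≤ hFun s y := by
      refine anti_of_cos_nonpos hs1 ?_ hyc.le
        (fun t ht => cos_nonpos_on k (le_trans hcase.le ht.1) ht.2)
      linarith
    refine le_trans ?_ h1
    have := trough_le hs0 hs1 (k + 1)
    calc hFun s (3 * π / 2) ≤ hFun s (3 * π / 2 + 2 * π * (k + 1 : ℕ)) := this
      _ = hFun s (c + 2 * π) := by rw [hcdef]; push_cast; ring_nf

end Statement8Aux

/-- Let `0 < s < 1`. For any `0 < δ₁ < 1/10`, the infimum of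
`h_s` over `[δ₁, ∞)` equals `min{h_s(δ₁), h_s(3π/2)}`. -/
theorem statement8 (s : ℝ) (hs0 : 0 < s) (hs1 : s < 1)
    (δ₁ : ℝ) (hδ0 : 0 < δ₁) (hδ1 : δ₁ < 1 / 10) :
    IsGLB ((fun y => hFun s y) '' Set.Ici δ₁)
      (min (hFun s δ₁) (hFun s (3 * Real.pi / 2))) := by
  have hπ := Real.pi_gt_three
  have hπ0 := Real.pi_pos
  have hδπ : δ₁ < Real.pi / 2 := by linarith
  have lb : ∀ y, δ₁ ≤ y →
      min (hFun s δ₁) (hFun s (3 * Real.pi / 2)) ≤ hFun s y := by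
    intro y hy
    rcases le_or_gt y (Real.pi / 2) with h1 | h1
    · refine le_trans (min_le_left _ _) ?_
      apply Statement8Aux.mono_of_cos_nonneg hs1 hδ0.le hy
      intro t ht
      exact Real.cos_nonneg_of_mem_Icc ⟨by linarith [ht.1], le_trans ht.2 h1⟩
    · rcases le_or_gt y (3 * Real.pi / 2) with h2 | h2
      · refine le_trans (min_le_right _ _) ?_
        apply Statement8Aux.anti_of_cos_nonpos hs1 (by linarith) h2
        intro t ht
        exact Real.cos_nonpos_of_pi_div_two_le_of_le (by linarith [ht.1]) (by linarith [ht.2])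
      · exact le_trans (min_le_right _ _)
          (Statement8Aux.lower_bound_tail hs0 hs1 h2.le)
  refine IsLeast.isGLB ⟨?_, ?_⟩
  · rcases min_cases (hFun s δ₁) (hFun s (3 * Real.pi / 2)) with ⟨h, _⟩ | ⟨h, _⟩
    · exact ⟨δ₁, Set.self_mem_Ici, h.symm⟩
    · exact ⟨3 * Real.pi / 2, Set.mem_Ici.mpr (by linarith), h.symm⟩
  · rintro x ⟨y, hy, rfl⟩
    exact lb y hy

end
end

section
/- Let τ > 0 and p(x) = (1+τ)x − τx³. Then: (i) if 0 < τ ≤ 1/2, then for every α with 1 ≤ α ≤ √(1 + 2/τ) one has max_{|x| ≤ α} |p(x)| ≤ α, and for every α with 1 < α < √(1 + 2/τ) the strict inequality max_{|x| ≤ α} |p(x)| < α holds (in particular max_{|x| ≤ 1}|p(x)| = 1); (ii) if 1/2 ≤ τ ≤ 2, then for every α with (2/3)(1+τ)^{3/2}/√(3τ) ≤ α ≤ √((2+τ)/τ) one has max_{|x| ≤ α} |p(x)| ≤ α, with strict inequality when (2/3)(1+τ)^{3/2}/√(3τ) < α < √((2+τ)/τ); (iii) if τ > 2, then the sequence defined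 by x₀ = √((1+τ)/(3τ)) and x_{n+1} = p(x_n) satisfies |x_n| → ∞ as n → ∞. -/
noncomputable section

/-- The cubic `p(x) = (1+τ)x − τx³` (one forward-Euler step of the Allen–Cahn
nonlinearity `f(u) = u − u³` with time step `τ`). -/
def cubicP (τ x : ℝ) : ℝ := (1 + τ) * x - τ * x ^ 3

lemma cubicP_neg (τ x : ℝ) : cubicP τ (-x) = -(cubicP τ x) := by
  simp [cubicP]; ring

lemma abs_cubicP_abs (τ x : ℝ) : |cubicP τ (|x|)| = |cubicP τ x| := by
  rcases abs_cases x with ⟨h, _⟩ | ⟨h, _⟩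
  · rw [h]
  · rw [h, cubicP_neg, abs_neg]

lemma upper1 {τ α y : ℝ} (hτ : 0 < τ) (hτ2 : τ ≤ 1/2) (hα : 1 ≤ α)
    (hy : 0 ≤ y) (hyα : y ≤ α) : cubicP τ y ≤ α := by
  unfold cubicP
  rcases le_or_gt y 1 with h | h
  · have h2 : 0 ≤ 1 - τ*y - τ*y^2 := by nlinarith
    nlinarith [mul_nonneg (sub_nonneg.2 h) h2]
  · nlinarith [mul_pos hτ (mul_pos (lt_trans zero_lt_one h) (by nlinarith : (0:ℝ) < y^2 - 1))]

lemma upper1' {τ α y : ℝ} (hτ : 0 < τ) (hτ2 : τ ≤ 1/2) (hα : 1 < α)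
    (hy : 0 ≤ y) (hyα : y ≤ α) : cubicP τ y < α := by
  unfold cubicP
  rcases le_or_gt y 1 with h | h
  · have h2 : 0 ≤ 1 - τ*y - τ*y^2 := by nlinarith
    nlinarith [mul_nonneg (sub_nonneg.2 h) h2]
  · nlinarith [mul_pos hτ (mul_pos (lt_trans zero_lt_one h) (by nlinarith : (0:ℝ) < y^2 - 1))]

lemma lower1 {τ α y : ℝ} (hτ : 0 < τ) (hq : τ * α^2 ≤ 2 + τ)
    (hy : 0 ≤ y) (hyα : y ≤ α) : -α ≤ cubicP τ y := by
  unfold cubicP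
  have hsq : y^2 ≤ α^2 := by nlinarith
  nlinarith [mul_nonneg (mul_nonneg hτ.le hy) (sub_nonneg.2 hsq),
    mul_le_mul_of_nonneg_right hq hy]

lemma lower1' {τ α y : ℝ} (hτ : 0 < τ) (hα : 0 < α) (hq : τ * α^2 < 2 + τ)
    (hy : 0 ≤ y) (hyα : y ≤ α) : -α < cubicP τ y := by
  unfold cubicP
  rcases eq_or_lt_of_le hy with rfl | hy'
  · simpa using hα
  · have hsq : y^2 ≤ α^2 := by nlinarith
    nlinarith [mul_nonneg (mul_nonneg hτ.le hy) (sub_nonneg.2 hsq),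
      mul_lt_mul_of_pos_right hq hy']

lemma le_crit {τ c y : ℝ} (hτ : 0 < τ) (hc : 0 ≤ c) (h3 : 3 * τ * c^2 = 1 + τ)
    (hy : 0 ≤ y) : cubicP τ y ≤ cubicP τ c := by
  unfold cubicP
  have key : (1+τ)*c - τ*c^3 - ((1+τ)*y - τ*y^3) = τ*(c-y)^2*(2*c+y) := by
    linear_combination (y - c) * h3
  nlinarith [mul_nonneg (mul_nonneg hτ.le (sq_nonneg (c-y))) (by positivity : (0:ℝ) ≤ 2*c+y)]

lemma M_eq {τ : ℝ} (hτ : 0 < τ) :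
    (2 / 3) * (1 + τ) ^ ((3 : ℝ) / 2) / Real.sqrt (3 * τ)
      = cubicP τ (Real.sqrt ((1 + τ) / (3 * τ))) := by
  have h1 : (0:ℝ) ≤ 1 + τ := by linarith
  have h2 : (0:ℝ) < 3 * τ := by linarith
  have hc : Real.sqrt ((1 + τ) / (3 * τ)) = Real.sqrt (1+τ) / Real.sqrt (3*τ) := by
    rw [Real.sqrt_div h1]
  have hr : (1 + τ) ^ ((3 : ℝ) / 2) = (1+τ) * Real.sqrt (1+τ) := by
    rw [show (3:ℝ)/2 = 1 + 1/2 by norm_num, Real.rpow_add (by linarith), Real.rpow_one,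
      ← Real.sqrt_eq_rpow]
  unfold cubicP
  rw [hc, hr]
  set s := Real.sqrt (3*τ) with hs
  set t := Real.sqrt (1+τ) with ht
  have hs2 : s ^ 2 = 3*τ := Real.sq_sqrt h2.le
  have ht2 : t ^ 2 = 1 + τ := Real.sq_sqrt h1
  have hne : s ≠ 0 := by positivity
  have ht3 : t^3 = (1+τ)*t := by rw [pow_succ, ht2]
  have hs3 : s^3 = (3*τ)*s := by rw [pow_succ, hs2]
  rw [div_pow, ht3, hs3]
  field_simp
  ring

lemma part3 {τ : ℝ} (hτ : 0 < τ) (hτ2 : 2 < τ) (x : ℕ → ℝ)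
    (h0 : x 0 = Real.sqrt ((1 + τ) / (3 * τ)))
    (hrec : ∀ n : ℕ, x (n + 1) = cubicP τ (x n)) :
    Filter.Tendsto (fun n : ℕ => |x n|) Filter.atTop Filter.atTop := by
  have h2 : (0:ℝ) < 3 * τ := by linarith
  have hcpos : 0 < Real.sqrt ((1 + τ) / (3 * τ)) := Real.sqrt_pos.2 (by positivity)
  set c := Real.sqrt ((1 + τ) / (3 * τ)) with hc
  have hc2 : c ^ 2 = (1 + τ) / (3 * τ) := Real.sq_sqrt (by positivity)
  set a := (2/3) * (1+τ) * c with ha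
  have hx1 : x 1 = a := by
    rw [hrec 0, h0, cubicP, ha]
    have : τ * c ^ 3 = (1+τ)/3 * c := by
      rw [pow_succ, hc2]; field_simp
    rw [this]; ring
  have hapos : 0 < a := by positivity
  have ha2 : a ^ 2 = 4 * (1+τ)^3 / (27 * τ) := by
    rw [ha, mul_pow, mul_pow, hc2]; field_simp; ring
  set lam := τ * a ^ 2 - 1 - τ with hlam
  have hlam1 : 1 < lam := by
    have key : lam - 1 = (τ - 2) * (2*τ + 5)^2 / 27 := by
      rw [hlam, ha2]; field_simp; ring
    nlinarith [sq_nonneg (2*τ+5),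
      mul_pos (by linarith : (0:ℝ) < τ - 2) (by positivity : (0:ℝ) < (2*τ+5)^2)]
  have step : ∀ z : ℝ, a ≤ |z| → lam * |z| ≤ |cubicP τ z| := by
    intro z hz
    have hz2 : a ^ 2 ≤ |z| ^ 2 := by nlinarith [abs_nonneg z]
    have h1 : |cubicP τ z| = |τ * z^3 - (1+τ)*z| := by
      rw [cubicP, abs_sub_comm]
    have h2' : τ * |z|^3 - (1+τ)*|z| ≤ |τ * z^3 - (1+τ)*z| := by
      calc τ * |z|^3 - (1+τ)*|z| = |τ * z^3| - |(1+τ)*z| := by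
            rw [abs_mul, abs_mul, abs_pow, abs_of_pos hτ,
              abs_of_pos (by linarith : (0:ℝ) < 1+τ)]
        _ ≤ |τ * z^3 - (1+τ)*z| := abs_sub_abs_le_abs_sub _ _
    have h3 : lam * |z| ≤ τ * |z|^3 - (1+τ)*|z| := by
      have hl : lam ≤ τ * |z|^2 - 1 - τ := by nlinarith
      nlinarith [abs_nonneg z, mul_le_mul_of_nonneg_right hl (abs_nonneg z)]
    rw [h1]; linarith
  have grow : ∀ n : ℕ, a * lam ^ n ≤ |x (n+1)| := by
    intro n
    induction n with
    | zero => simp [hx1, abs_of_pos hapos]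
    | succ k ih =>
      have hge : a ≤ |x (k+1)| := by
        calc a = a * 1 := by ring
          _ ≤ a * lam ^ k := mul_le_mul_of_nonneg_left (one_le_pow₀ hlam1.le) hapos.le
          _ ≤ |x (k+1)| := ih
      calc a * lam ^ (k+1) = lam * (a * lam ^ k) := by ring
        _ ≤ lam * |x (k+1)| := mul_le_mul_of_nonneg_left ih (by linarith)
        _ ≤ |cubicP τ (x (k+1))| := step (x (k+1)) hge
        _ = |x (k+1+1)| := by rw [hrec (k+1)]
  have hgeo : Filter.Tendsto (fun n : ℕ => a * lam ^ n) Filter.atTop Filter.atTop :=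
    (tendsto_pow_atTop_atTop_of_one_lt hlam1).const_mul_atTop hapos
  have h1 : Filter.Tendsto (fun n : ℕ => |x (n+1)|) Filter.atTop Filter.atTop :=
    Filter.tendsto_atTop_mono grow hgeo
  exact (Filter.tendsto_add_atTop_iff_nat 1).mp h1

/-- Properties of `max_{|x| ≤ α} |p(x)|` for the cubic
`p(x) = (1+τ)x − τx³`, in the three regimes `0 < τ ≤ 1/2`, `1/2 ≤ τ ≤ 2`, `τ > 2`. -/
theorem statement16 (τ : ℝ) (hτ : 0 < τ) :
    (τ ≤ 1 / 2 →
      (∀ α : ℝ, 1 ≤ α → α ≤ Real.sqrt (1 + 2 / τ) →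
        ∀ x : ℝ, |x| ≤ α → |cubicP τ x| ≤ α) ∧
      (∀ α : ℝ, 1 < α → α < Real.sqrt (1 + 2 / τ) →
        ∀ x : ℝ, |x| ≤ α → |cubicP τ x| < α) ∧
      ((∀ x : ℝ, |x| ≤ 1 → |cubicP τ x| ≤ 1) ∧ ∃ x : ℝ, |x| ≤ 1 ∧ |cubicP τ x| = 1)) ∧
    (1 / 2 ≤ τ → τ ≤ 2 →
      (∀ α : ℝ, (2 / 3) * (1 + τ) ^ ((3 : ℝ) / 2) / Real.sqrt (3 * τ) ≤ α →
        α ≤ Real.sqrt ((2 + τ) / τ) → ∀ x : ℝ, |x| ≤ α → |cubicP τ x| ≤ α) ∧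
      (∀ α : ℝ, (2 / 3) * (1 + τ) ^ ((3 : ℝ) / 2) / Real.sqrt (3 * τ) < α →
        α < Real.sqrt ((2 + τ) / τ) → ∀ x : ℝ, |x| ≤ α → |cubicP τ x| < α)) ∧
    (2 < τ →
      ∀ x : ℕ → ℝ, x 0 = Real.sqrt ((1 + τ) / (3 * τ)) →
        (∀ n : ℕ, x (n + 1) = cubicP τ (x n)) →
        Filter.Tendsto (fun n : ℕ => |x n|) Filter.atTop Filter.atTop) := by
  refine ⟨fun hτ2 => ?_, fun hl hr => ?_, fun ht2 x h0 hrec => part3 hτ ht2 x h0 hrec⟩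
  · have hqle : ∀ α : ℝ, α ≤ Real.sqrt (1 + 2 / τ) → 0 ≤ α → τ * α ^ 2 ≤ 2 + τ := by
      intro α hle hα0
      have hα2 : α ^ 2 ≤ 1 + 2 / τ := by
        have := Real.sq_sqrt (by positivity : (0:ℝ) ≤ 1 + 2 / τ)
        nlinarith [Real.sqrt_nonneg (1 + 2 / τ)]
      have : τ * (1 + 2 / τ) = τ + 2 := by field_simp
      nlinarith
    refine ⟨?_, ?_, ?_⟩
    · intro α hα hαs x hx
      rw [← abs_cubicP_abs]
      have hy0 : 0 ≤ |x| := abs_nonneg x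
      rw [abs_le]
      exact ⟨lower1 hτ (hqle α hαs (by linarith)) hy0 hx, upper1 hτ hτ2 hα hy0 hx⟩
    · intro α hα hαs x hx
      rw [← abs_cubicP_abs]
      have hy0 : 0 ≤ |x| := abs_nonneg x
      have hq : τ * α ^ 2 < 2 + τ := by
        have hα2 : α ^ 2 < 1 + 2 / τ := by
          have := Real.sq_sqrt (by positivity : (0:ℝ) ≤ 1 + 2 / τ)
          nlinarith [Real.sqrt_nonneg (1 + 2 / τ)]
        have : τ * (1 + 2 / τ) = τ + 2 := by field_simp
        nlinarith
      rw [abs_lt]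
      exact ⟨lower1' hτ (by linarith) hq hy0 hx, upper1' hτ hτ2 hα hy0 hx⟩
    · constructor
      · intro x hx
        rw [← abs_cubicP_abs]
        have hy0 : 0 ≤ |x| := abs_nonneg x
        rw [abs_le]
        refine ⟨lower1 hτ (by nlinarith) hy0 hx, upper1 hτ hτ2 le_rfl hy0 hx⟩
      · exact ⟨1, by norm_num, by norm_num [cubicP]⟩
  · have h1 : (0:ℝ) ≤ 1 + τ := by linarith
    have h3τ : (0:ℝ) < 3 * τ := by linarith
    have hcnn : (0:ℝ) ≤ Real.sqrt ((1 + τ) / (3 * τ)) := Real.sqrt_nonneg _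
    have hc2 : 3 * τ * Real.sqrt ((1 + τ) / (3 * τ)) ^ 2 = 1 + τ := by
      rw [Real.sq_sqrt (by positivity)]; field_simp
    have hMpos : 0 < (2 / 3) * (1 + τ) ^ ((3 : ℝ) / 2) / Real.sqrt (3 * τ) := by
      have : (0:ℝ) < (1 + τ) ^ ((3 : ℝ) / 2) := Real.rpow_pos_of_pos (by linarith) _
      positivity
    have hqle : ∀ α : ℝ, α ≤ Real.sqrt ((2 + τ) / τ) → 0 ≤ α → τ * α ^ 2 ≤ 2 + τ := by
      intro α hle hα0
      have hα2 : α ^ 2 ≤ (2 + τ) / τ := by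
        have := Real.sq_sqrt (by positivity : (0:ℝ) ≤ (2 + τ) / τ)
        nlinarith [Real.sqrt_nonneg ((2 + τ) / τ)]
      have : τ * ((2 + τ) / τ) = 2 + τ := by field_simp
      nlinarith
    constructor
    · intro α hM hαs x hx
      rw [← abs_cubicP_abs]
      have hy0 : 0 ≤ |x| := abs_nonneg x
      rw [abs_le]
      refine ⟨lower1 hτ (hqle α hαs (le_trans hMpos.le hM)) hy0 hx, ?_⟩
      calc cubicP τ (|x|) ≤ cubicP τ (Real.sqrt ((1 + τ) / (3 * τ))) :=
            le_crit hτ hcnn hc2 hy0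
        _ = (2 / 3) * (1 + τ) ^ ((3 : ℝ) / 2) / Real.sqrt (3 * τ) := (M_eq hτ).symm
        _ ≤ α := hM
    · intro α hM hαs x hx
      rw [← abs_cubicP_abs]
      have hy0 : 0 ≤ |x| := abs_nonneg x
      have hαpos : 0 < α := lt_trans hMpos hM
      have hq : τ * α ^ 2 < 2 + τ := by
        have hα2 : α ^ 2 < (2 + τ) / τ := by
          have := Real.sq_sqrt (by positivity : (0:ℝ) ≤ (2 + τ) / τ)
          nlinarith [Real.sqrt_nonneg ((2 + τ) / τ)]
        have : τ * ((2 + τ) / τ) = 2 + τ := by field_simp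
        nlinarith
      rw [abs_lt]
      refine ⟨lower1' hτ hαpos hq hy0 hx, ?_⟩
      calc cubicP τ (|x|) ≤ cubicP τ (Real.sqrt ((1 + τ) / (3 * τ))) :=
            le_crit hτ hcnn hc2 hy0
        _ = (2 / 3) * (1 + τ) ^ ((3 : ℝ) / 2) / Real.sqrt (3 * τ) := (M_eq hτ).symm
        _ < α := hM
  
end
end

section
/- There exist ν > 0, τ with 0 < τ ≤ 1/2, an integer N ≥ 1, and a real-valued trigonometric polynomial u⁰ on 𝕋 of degree at most N with ‖u⁰‖_∞ ≤ 1, such that the function u¹(x) = ∑_{k ∈ ℤ, |k| ≤ N} (1 + 4π²ν²τk²)^{-1} ĝ(k) e^{2πikx}, where g = (1+τ)u⁰ − τ(u⁰)³ and ĝ(k) = ∫₀¹ g(x) e^{−2πikx} dx, satisfies ‖u¹‖_∞ > 1. In other words, the implicit-explicit Fourier Galerkin scheme for the Allen–Cahn equation does not obey the strict maximum principle in general. -/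
open MeasureTheory

noncomputable section

/-- The character `e^{2πit}`. -/
def e1 (t : ℝ) : ℂ := Complex.exp (2 * Real.pi * Complex.I * t)

/-- One implicit-explicit Fourier Galerkin step for Allen–Cahn:
`u¹ = (Id − τν²∂ₓₓ)⁻¹ Π_N ((1+τ)u⁰ − τ(u⁰)³)`, written out via Fourier coefficients of
`g = (1+τ)u⁰ − τ(u⁰)³`. -/
def imexStep (ν τ : ℝ) (N : ℕ) (u0 : ℝ → ℝ) (x : ℝ) : ℂ :=
  ∑ k ∈ Finset.Icc (-(N : ℤ)) (N : ℤ),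
    (((1 + 4 * Real.pi ^ 2 * ν ^ 2 * τ * (k : ℝ) ^ 2)⁻¹ : ℝ) : ℂ) *
      (∫ y in Set.Ico (0 : ℝ) 1,
        (((1 + τ) * u0 y - τ * (u0 y) ^ 3 : ℝ) : ℂ) * e1 (-(k : ℝ) * y)) *
      e1 ((k : ℝ) * x)

lemma e1_ne (y : ℝ) : e1 y ≠ 0 := Complex.exp_ne_zero _

lemma e1_zpow (n : ℤ) (y : ℝ) : e1 ((n : ℝ) * y) = e1 y ^ n := by
  unfold e1
  rw [show ((((n:ℝ) * y : ℝ)) : ℂ) = (n : ℂ) * (y : ℝ) by push_cast; ring]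
  rw [show 2 * (Real.pi:ℂ) * Complex.I * ((n:ℂ) * (y:ℝ)) = (n:ℂ) * (2 * Real.pi * Complex.I * (y:ℝ)) by ring]
  exact Complex.exp_int_mul _ n

lemma e1_zero : e1 0 = 1 := by
  unfold e1; simp

lemma intOn_e1 (m : ℤ) : IntegrableOn (fun y : ℝ => e1 ((m : ℝ) * y)) (Set.Ico (0:ℝ) 1) := by
  have hc : Continuous (fun y : ℝ => e1 ((m : ℝ) * y)) := by unfold e1; fun_prop
  exact hc.integrableOn_Icc.mono_set Set.Ico_subset_Icc_self

lemma integral_e1 (m : ℤ) :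
    (∫ y in Set.Ico (0:ℝ) 1, e1 ((m : ℝ) * y)) = if m = 0 then 1 else 0 := by
  have hIoo : (∫ y in Set.Ico (0:ℝ) 1, e1 ((m : ℝ) * y))
      = ∫ y in (0:ℝ)..1, e1 ((m : ℝ) * y) := by
    rw [MeasureTheory.integral_Ico_eq_integral_Ioo,
      intervalIntegral.integral_of_le (by norm_num : (0:ℝ) ≤ 1),
      MeasureTheory.integral_Ioc_eq_integral_Ioo]
  rw [hIoo]
  by_cases hm : m = 0
  · subst hm; simp [e1_zero]
  · simp only [hm, if_false]
    have hpi : (Real.pi:ℂ) ≠ 0 := Complex.ofReal_ne_zero.mpr Real.pi_ne_zero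
    have hmne : ((m:ℂ)) ≠ 0 := Int.cast_ne_zero.mpr hm
    have hc : (2 * (Real.pi:ℂ) * Complex.I * m) ≠ 0 :=
      mul_ne_zero (mul_ne_zero (mul_ne_zero two_ne_zero hpi) Complex.I_ne_zero) hmne
    have heq : ∀ y : ℝ, e1 ((m : ℝ) * y) = Complex.exp ((2 * (Real.pi:ℂ) * Complex.I * m) * y) := by
      intro y; unfold e1; congr 1; push_cast; ring
    rw [intervalIntegral.integral_congr (fun y _ => heq y)]
    rw [integral_exp_mul_complex hc]
    have h1 : Complex.exp (2 * (Real.pi:ℂ) * Complex.I * m * (((1:ℝ)):ℂ)) = 1 := by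
      rw [show (2 * (Real.pi:ℂ) * Complex.I * m * (((1:ℝ)):ℂ)) = (m : ℂ) * (2 * Real.pi * Complex.I) by push_cast; ring]
      exact Complex.exp_int_mul_two_pi_mul_I m
    have h0 : Complex.exp (2 * (Real.pi:ℂ) * Complex.I * m * (((0:ℝ)):ℂ)) = 1 := by
      norm_num
    rw [h1, h0]; simp

open Real in
lemma cos_cast (y : ℝ) : ((Real.cos (2*Real.pi*y) : ℝ) : ℂ) = (e1 y + e1 (-y))/2 := by
  rw [Complex.ofReal_cos]
  show (Complex.exp _ + Complex.exp _) / 2 = _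
  unfold e1
  rw [show (((2*Real.pi*y : ℝ)):ℂ) * Complex.I = 2 * Real.pi * Complex.I * ((y:ℝ):ℂ) by push_cast; ring,
    show -(((2*Real.pi*y : ℝ)):ℂ) * Complex.I = 2 * Real.pi * Complex.I * (((-y:ℝ)):ℂ) by push_cast; ring]

lemma key (k : ℤ) (y : ℝ) :
    (((1 + (1/2 : ℝ)) * Real.cos (2*Real.pi*y) - (1/2) * (Real.cos (2*Real.pi*y))^3 : ℝ) : ℂ)
      * e1 (-(k : ℝ) * y)
    = 9/16 * e1 (((1 - k : ℤ) : ℝ) * y) + 9/16 * e1 (((-1 - k : ℤ) : ℝ) * y)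
      - 1/16 * e1 (((3 - k : ℤ) : ℝ) * y) - 1/16 * e1 (((-3 - k : ℤ) : ℝ) * y) := by
  have hcast : (((1 + (1/2 : ℝ)) * Real.cos (2*Real.pi*y) - (1/2) * (Real.cos (2*Real.pi*y))^3 : ℝ) : ℂ)
      = (1 + (1/2 : ℂ)) * ((Real.cos (2*Real.pi*y) : ℝ) : ℂ)
        - (1/2) * (((Real.cos (2*Real.pi*y) : ℝ) : ℂ))^3 := by push_cast; ring
  rw [hcast, cos_cast]
  have hneg : e1 (-y) = e1 ((( -1 : ℤ) : ℝ) * y) := by norm_num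
  have hmk : e1 (-(k : ℝ) * y) = e1 (((-k : ℤ) : ℝ) * y) := by norm_num
  rw [hneg, hmk]
  simp only [e1_zpow]
  set t := e1 y with ht
  have htne : t ≠ 0 := e1_ne y
  simp only [zpow_sub₀ htne, zpow_neg, zpow_one, zpow_ofNat]
  have hk : t ^ k ≠ 0 := zpow_ne_zero _ htne
  generalize hu : t ^ k = u at hk ⊢
  clear_value t
  clear ht hneg hmk hcast hu
  rw [pow_one]
  have ht3 : t ^ 3 ≠ 0 := pow_ne_zero _ htne
  have h : ((1 + 1/2 : ℂ) * ((t + t⁻¹) / 2) - 1/2 * ((t + t⁻¹) / 2) ^ 3)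
      = 9/16 * t + 9/16 * t⁻¹ - 1/16 * t^3 - 1/16 * (t^3)⁻¹ := by
    rw [show (t^3)⁻¹ = t⁻¹^3 by rw [inv_pow]]
    have hs : t * t⁻¹ = 1 := mul_inv_cancel₀ htne
    linear_combination (-(3/16:ℂ) * (t + t⁻¹)) * hs
  rw [h]
  simp only [div_eq_mul_inv]
  ring

lemma coeff (k : ℤ) :
    (∫ y in Set.Ico (0:ℝ) 1,
      (((1 + (1/2 : ℝ)) * Real.cos (2*Real.pi*y) - (1/2) * (Real.cos (2*Real.pi*y))^3 : ℝ) : ℂ)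
        * e1 (-(k : ℝ) * y))
    = 9/16 * (if (1 - k : ℤ) = 0 then 1 else 0) + 9/16 * (if (-1 - k : ℤ) = 0 then 1 else 0)
      - 1/16 * (if (3 - k : ℤ) = 0 then 1 else 0) - 1/16 * (if (-3 - k : ℤ) = 0 then 1 else 0) := by
  have hA := (intOn_e1 (1 - k)).const_mul (9/16 : ℂ)
  have hB := (intOn_e1 (-1 - k)).const_mul (9/16 : ℂ)
  have hC := (intOn_e1 (3 - k)).const_mul (1/16 : ℂ)
  have hD := (intOn_e1 (-3 - k)).const_mul (1/16 : ℂ)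
  have hAB : Integrable (fun x : ℝ => 9/16 * e1 (((1-k:ℤ):ℝ)*x) + 9/16 * e1 (((-1-k:ℤ):ℝ)*x))
      (volume.restrict (Set.Ico (0:ℝ) 1)) := hA.add hB
  have hABC : Integrable (fun x : ℝ => 9/16 * e1 (((1-k:ℤ):ℝ)*x) + 9/16 * e1 (((-1-k:ℤ):ℝ)*x)
      - 1/16 * e1 (((3-k:ℤ):ℝ)*x)) (volume.restrict (Set.Ico (0:ℝ) 1)) := hAB.sub hC
  rw [MeasureTheory.setIntegral_congr_fun measurableSet_Ico (fun y _ => key k y)]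
  rw [MeasureTheory.integral_sub hABC hD,
    MeasureTheory.integral_sub hAB hC,
    MeasureTheory.integral_add hA hB,
    MeasureTheory.integral_const_mul, MeasureTheory.integral_const_mul,
    MeasureTheory.integral_const_mul, MeasureTheory.integral_const_mul,
    integral_e1, integral_e1, integral_e1, integral_e1]



/-- There exist `ν > 0`, `0 < τ ≤ 1/2`, `N ≥ 1` and a real trigonometric
polynomial `u⁰` of degree at most `N` with `‖u⁰‖_∞ ≤ 1` such that
`‖(Id − τν²∂ₓₓ)⁻¹ Π_N ((1+τ)u⁰ − τ(u⁰)³)‖_∞ > 1`: the implicit-explicit Fourier Galerkin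
scheme for Allen–Cahn does not obey the strict maximum principle in general. -/
theorem statement18 :
    ∃ (ν τ : ℝ) (N : ℕ) (u0 : ℝ → ℝ),
      0 < ν ∧ 0 < τ ∧ τ ≤ 1 / 2 ∧ 1 ≤ N ∧
      (∃ a : ℤ → ℂ, ∀ x : ℝ,
        ((u0 x : ℝ) : ℂ) = ∑ k ∈ Finset.Icc (-(N : ℤ)) (N : ℤ), a k * e1 ((k : ℝ) * x)) ∧
      (∀ x : ℝ, |u0 x| ≤ 1) ∧
      ∃ x : ℝ, 1 < ‖imexStep ν τ N u0 x‖ := by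
  refine ⟨1/100, 1/2, 1, fun x => Real.cos (2*Real.pi*x), by norm_num, by norm_num, by norm_num,
    le_refl 1, ?_, fun x => Real.abs_cos_le_one _, ?_⟩
  · refine ⟨fun k => if k = 0 then 0 else 1/2, fun x => ?_⟩
    have hIcc : Finset.Icc (-((1:ℕ):ℤ)) ((1:ℕ):ℤ) = {-1, 0, 1} := by decide
    rw [hIcc, Finset.sum_insert (by decide), Finset.sum_insert (by decide),
      Finset.sum_singleton]
    norm_num
    have h := cos_cast x
    rw [Complex.ofReal_cos] at h
    push_cast at h
    rw [h]
    ring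
  · refine ⟨0, ?_⟩
    have hIcc : Finset.Icc (-((1:ℕ):ℤ)) ((1:ℕ):ℤ) = {-1, 0, 1} := by decide
    simp only [imexStep]
    rw [hIcc, Finset.sum_insert (by decide), Finset.sum_insert (by decide),
      Finset.sum_singleton]
    rw [coeff (-1), coeff 0, coeff 1]
    norm_num [e1_zero]
    have hpos : (0:ℝ) < 1 + 4 * Real.pi ^ 2 * (1 / 10000) * (1 / 2) := by positivity
    have hval : ((1 + 4 * (Real.pi:ℂ) ^ 2 * (1 / 10000) * (1 / 2))⁻¹ * (9 / 16) +
        (1 + 4 * (Real.pi:ℂ) ^ 2 * (1 / 10000) * (1 / 2))⁻¹ * (9 / 16))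
        = (((1 + 4 * Real.pi ^ 2 * (1 / 10000) * (1 / 2))⁻¹ * (9 / 8) : ℝ) : ℂ) := by
      push_cast
      ring
    rw [hval, Complex.norm_real, Real.norm_eq_abs]
    have hlt : 1 + 4 * Real.pi ^ 2 * (1 / 10000) * (1 / 2) < 9 / 8 := by
      nlinarith [Real.pi_lt_d2, Real.pi_pos]
    have h1 : (1:ℝ) < (1 + 4 * Real.pi ^ 2 * (1 / 10000) * (1 / 2))⁻¹ * (9 / 8) := by
      rw [inv_mul_eq_div, lt_div_iff₀ hpos]
      linarith
    rw [abs_of_pos (by linarith)]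
    exact h1


end
end
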